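/- arXiv:2304.03382 — 3 statements merged into one kernel-verified Lean document; each statement's English description precedes it below -/
import Mathlib

section
/- With p as above (additive Gaussian noise model in topological order), if l = d is the last node (a leaf, i.e., no f_i with i > l depends on x_l through the sum), then s_l(x) = −(x_l − f_l(x))/σ_l² and consequently ∂s_l/∂x_l (x) = −1/σ_l² is constant in x. -/
/-!
The log-density is a sum over nodes of Gaussian log-terms `-(x_i - f_i(x))² / (2σ_i²)` plus
constants. Since `f_i` only reads coordinates before `i`, the last coordinate enters only the
term of the last node itself, and `f_l` does not depend on `x_l`; so along the last coordinate
the log-density is a quadratic `-(t - f_l(x))² / (2σ_l²)` plus a constant.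
-/

open Real Finset

/-- The density of the nonlinear additive Gaussian noise model in topological order. -/
noncomputable def anmDensity (d : ℕ) (f : Fin d → (Fin d → ℝ) → ℝ)
    (σ : Fin d → ℝ) (x : Fin d → ℝ) : ℝ :=
  ∏ i : Fin d, (Real.sqrt (2 * π * (σ i) ^ 2))⁻¹ *
    Real.exp (-(x i - f i x) ^ 2 / (2 * (σ i) ^ 2))

theorem Fin.apply_update_last_eq_of_forall_lt {α β : Type*} {n : ℕ}
    {g : (Fin (n + 1) → α) → β} {i : Fin (n + 1)}
    (hg : ∀ x y, (∀ k, k < i → x k = y k) → g x = g y) (x : Fin (n + 1) → α) (t : α) :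
    g (Function.update x (Fin.last n) t) = g x :=
  hg _ _ fun _ hk => Function.update_of_ne (hk.trans_le i.le_last).ne _ _

theorem hasDerivAt_neg_sub_sq_div (a s x : ℝ) :
    HasDerivAt (fun t : ℝ => -(t - a) ^ 2 / (2 * s ^ 2)) (-(x - a) / s ^ 2) x := by
  refine (((hasDerivAt_id' x).sub_const a).fun_pow 2).fun_neg.div_const (2 * s ^ 2)
    |>.congr_deriv ?_
  ring

theorem log_anmDensity {n : ℕ} (f : Fin n → (Fin n → ℝ) → ℝ) {σ : Fin n → ℝ}
    (hσ : ∀ i, σ i ≠ 0) (x : Fin n → ℝ) :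
    log (anmDensity n f σ x) =
      ∑ i, (log (√(2 * π * σ i ^ 2))⁻¹ + -(x i - f i x) ^ 2 / (2 * σ i ^ 2)) := by
  have hc : ∀ i, (√(2 * π * σ i ^ 2))⁻¹ ≠ 0 := fun i => by
    have := hσ i
    positivity
  rw [anmDensity, log_prod fun i _ => mul_ne_zero (hc i) (exp_ne_zero _)]
  simp only [log_mul (hc _) (exp_ne_zero _), log_exp]

theorem hasDerivAt_log_anmDensity_update_last {n : ℕ}
    {f : Fin (n + 1) → (Fin (n + 1) → ℝ) → ℝ} {σ : Fin (n + 1) → ℝ} (hσ : ∀ i, σ i ≠ 0)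
    (hdep : ∀ (i : Fin (n + 1)) (x y : Fin (n + 1) → ℝ),
      (∀ k : Fin (n + 1), k < i → x k = y k) → f i x = f i y) (x : Fin (n + 1) → ℝ) :
    HasDerivAt (fun t => log (anmDensity (n + 1) f σ (Function.update x (Fin.last n) t)))
      (-(x (Fin.last n) - f (Fin.last n) x) / σ (Fin.last n) ^ 2) (x (Fin.last n)) := by
  simp only [log_anmDensity f hσ, Fin.apply_update_last_eq_of_forall_lt (hdep _)]
  refine (HasDerivAt.fun_sum (u := univ) (A' := fun i => if i = Fin.last n then
    -(x (Fin.last n) - f (Fin.last n) x) / σ (Fin.last n) ^ 2 else 0) fun i _ => ?_).congr_deriv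
    (by simp)
  split_ifs with hi
  · subst hi
    simpa using (hasDerivAt_neg_sub_sq_div (f (Fin.last n) x) (σ (Fin.last n))
      (x (Fin.last n))).const_add (log (√(2 * π * σ (Fin.last n) ^ 2))⁻¹)
  · simpa [Function.update_of_ne hi] using hasDerivAt_const _ _

theorem leaf_score_and_constant_diagonal_general
    (d : ℕ) (f : Fin (d + 1) → (Fin (d + 1) → ℝ) → ℝ) (σ : Fin (d + 1) → ℝ)
    (hσ : ∀ i, 0 < σ i)
    (hdep : ∀ (i : Fin (d + 1)) (x y : Fin (d + 1) → ℝ),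
      (∀ k : Fin (d + 1), k < i → x k = y k) → f i x = f i y) :
    ∀ x : Fin (d + 1) → ℝ,
      -- the score at the leaf l = d (last node) is  s_l(x) = -(x_l - f_l(x))/σ_l²
      HasDerivAt
        (fun t : ℝ => Real.log (anmDensity (d + 1) f σ (Function.update x (Fin.last d) t)))
        (-(x (Fin.last d) - f (Fin.last d) x) / (σ (Fin.last d)) ^ 2)
        (x (Fin.last d)) ∧
      -- consequently ∂s_l/∂x_l is the constant -1/σ_l²
      HasDerivAt
        (fun t : ℝ =>
          -(t - f (Fin.last d) (Function.update x (Fin.last d) t)) / (σ (Fin.last d)) ^ 2)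
        (-1 / (σ (Fin.last d)) ^ 2)
        (x (Fin.last d)) := by
  intro x
  refine ⟨hasDerivAt_log_anmDensity_update_last (fun i => (hσ i).ne') hdep x, ?_⟩
  simp only [Fin.apply_update_last_eq_of_forall_lt (hdep _)]
  exact ((hasDerivAt_id' _).sub_const _).fun_neg.div_const _

theorem leaf_score_and_constant_diagonal
    (d : ℕ) (f : Fin (d + 1) → (Fin (d + 1) → ℝ) → ℝ) (σ : Fin (d + 1) → ℝ)
    (hσ : ∀ i, 0 < σ i)
    (hdep : ∀ (i : Fin (d + 1)) (x y : Fin (d + 1) → ℝ),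
      (∀ k : Fin (d + 1), k < i → x k = y k) → f i x = f i y)
    (hdiff : ∀ i : Fin (d + 1), Differentiable ℝ (f i)) :
    ∀ x : Fin (d + 1) → ℝ,
      -- the score at the leaf l = d (last node) is  s_l(x) = -(x_l - f_l(x))/σ_l²
      HasDerivAt
        (fun t : ℝ => Real.log (anmDensity (d + 1) f σ (Function.update x (Fin.last d) t)))
        (-(x (Fin.last d) - f (Fin.last d) x) / (σ (Fin.last d)) ^ 2)
        (x (Fin.last d)) ∧
      -- consequently ∂s_l/∂x_l is the constant -1/σ_l²
      HasDerivAt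
        (fun t : ℝ =>
          -(t - f (Fin.last d) (Function.update x (Fin.last d) t)) / (σ (Fin.last d)) ^ 2)
        (-1 / (σ (Fin.last d)) ^ 2)
        (x (Fin.last d)) :=
  leaf_score_and_constant_diagonal_general d f σ hσ hdep
end

section
/- With p as above, l = d the leaf node, and j < l: if f_l does not depend on coordinate j, then E[|∂s_l/∂x_j (X)|] = 0, where X has density p; conversely, if (∂f_l/∂x_j)(X) ≠ 0 almost surely, then E[|∂s_l/∂x_j (X)|] > 0. -/
open Real Finset MeasureTheory

lemma anmDensity_pos (d : ℕ) (f : Fin d → (Fin d → ℝ) → ℝ) (σ : Fin d → ℝ)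
    (hσ : ∀ i, 0 < σ i) (x : Fin d → ℝ) : 0 < anmDensity d f σ x := by
  apply Finset.prod_pos
  intro i _
  have hs := hσ i
  have h1 : (0:ℝ) < 2 * π * (σ i) ^ 2 := by positivity
  have := Real.sqrt_pos.mpr h1
  positivity

theorem lemma1_leaf_edge_criterion
    (d : ℕ) (f : Fin (d + 1) → (Fin (d + 1) → ℝ) → ℝ) (σ : Fin (d + 1) → ℝ)
    (hσ : ∀ i, 0 < σ i)
    (hdep : ∀ (i : Fin (d + 1)) (x y : Fin (d + 1) → ℝ),
      (∀ k : Fin (d + 1), k < i → x k = y k) → f i x = f i y)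
    (hdiff : ∀ i : Fin (d + 1), ContDiff ℝ 2 (f i))
    -- df i j x is the partial derivative ∂fᵢ/∂xⱼ at x
    (df : Fin (d + 1) → Fin (d + 1) → (Fin (d + 1) → ℝ) → ℝ)
    (hdf : ∀ (i j : Fin (d + 1)) (x : Fin (d + 1) → ℝ),
      HasDerivAt (fun t : ℝ => f i (Function.update x j t)) (df i j x) (x j))
    (hmeas : ∀ i j, Measurable (df i j))
    -- P is the law of X, with density p
    (P : Measure (Fin (d + 1) → ℝ))
    (hP : P = (volume : Measure (Fin (d + 1) → ℝ)).withDensity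
      (fun x => ENNReal.ofReal (anmDensity (d + 1) f σ x)))
    (j : Fin (d + 1)) (hj : j < Fin.last d) :
    -- if f_l does not depend on coordinate j then E[|∂s_l/∂x_j(X)|] = 0 ...
    ((∀ (x : Fin (d + 1) → ℝ) (t : ℝ),
        f (Fin.last d) (Function.update x j t) = f (Fin.last d) x) →
      (∫⁻ x, ENNReal.ofReal |df (Fin.last d) j x / (σ (Fin.last d)) ^ 2| ∂P) = 0) ∧
    -- ... conversely, if ∂f_l/∂x_j (X) ≠ 0 a.s. then E[|∂s_l/∂x_j(X)|] > 0
    ((∀ᵐ x ∂P, df (Fin.last d) j x ≠ 0) →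
      0 < ∫⁻ x, ENNReal.ofReal |df (Fin.last d) j x / (σ (Fin.last d)) ^ 2| ∂P) := by
  constructor
  · intro hconst
    have hzero : ∀ x, df (Fin.last d) j x = 0 := by
      intro x
      have h1 := hdf (Fin.last d) j x
      have h2 : (fun t : ℝ => f (Fin.last d) (Function.update x j t)) =
          fun _ : ℝ => f (Fin.last d) x := by
        funext t; exact hconst x t
      rw [h2] at h1
      exact h1.unique (hasDerivAt_const _ _)
    simp [hzero]
  · intro hne
    have hsl := hσ (Fin.last d)
    have hσl : (σ (Fin.last d)) ^ 2 ≠ 0 := by positivity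
    by_contra h
    push_neg at h
    have h0 : (∫⁻ x, ENNReal.ofReal |df (Fin.last d) j x / (σ (Fin.last d)) ^ 2| ∂P) = 0 :=
      le_antisymm h zero_le
    have hm : Measurable (fun x => ENNReal.ofReal |df (Fin.last d) j x / (σ (Fin.last d)) ^ 2|) :=
      (((hmeas (Fin.last d) j).div_const _).abs).ennreal_ofReal
    have hae := (lintegral_eq_zero_iff hm).mp h0
    have hfalse : ∀ᵐ x ∂P, False := by
      filter_upwards [hne, hae] with x hx hx2
      simp only [Pi.zero_apply, ENNReal.ofReal_eq_zero] at hx2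
      have : |df (Fin.last d) j x / (σ (Fin.last d)) ^ 2| = 0 :=
        le_antisymm hx2 (abs_nonneg _)
      rw [abs_eq_zero, div_eq_zero_iff] at this
      rcases this with h' | h'
      · exact hx h'
      · exact hσl h'
    have hPuniv : P Set.univ = 0 := by
      simpa [ae_iff] using hfalse
    have hpos : 0 < P Set.univ := by
      rw [hP, withDensity_apply _ MeasurableSet.univ, setLIntegral_univ]
      rw [lintegral_pos_iff_support]
      · have : Function.support (fun x => ENNReal.ofReal (anmDensity (d + 1) f σ x)) =
            Set.univ := by
          ext x
          simp [Function.support, ENNReal.ofReal_eq_zero, not_le,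
            anmDensity_pos (d + 1) f σ hσ x]
        rw [this]
        exact Measure.measure_univ_pos.mpr (NeZero.ne _)
      · apply Measurable.ennreal_ofReal
        unfold anmDensity
        apply Finset.measurable_prod
        intro i _
        apply Measurable.mul measurable_const
        apply Continuous.measurable
        have hfc : Continuous (f i) := (hdiff i).continuous
        continuity
    rw [hPuniv] at hpos
    exact lt_irrefl _ hpos
end

section
/- Suppose each structural function is linear, i.e., f_i(x) = Σ_{k<i} a_{ik} x_k, and p(x) = ∏_{i=1}^d Gaussian density of x_i − f_i(x) with variance σ_i². Then for every j = 1,…,d, the diagonal entry of the score's Jacobian ∂s_j/∂x_j (x) = −1/σ_j² − Σ_{i>j} a_{ij}²/σ_i² is constant in x. -/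
/-! Every residual `x_i - f_i(x)` is affine in `x_j` with slope `δ_ij - a_ij`, and the score is a
fixed linear combination of residuals, so `∂s_j/∂x_j` is the constant
`-1/σ_j² + Σ_{i>j} a_ij (0 - a_ij)/σ_i²`. -/

open Real Finset

/-- Score component j of the linear additive Gaussian model in topological order:
`s_j(x) = -(x_j - f_j(x))/σ_j² + Σ_{i>j} a_{ij} (x_i - f_i(x))/σ_i²`
where `f_i(x) = Σ_{k<i} a_{ik} x_k`. -/
noncomputable def linScore (d : ℕ) (a : Fin d → Fin d → ℝ) (σ : Fin d → ℝ)
    (j : Fin d) (x : Fin d → ℝ) : ℝ :=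
  -(x j - ∑ k ∈ Finset.univ.filter (fun k : Fin d => k < j), a j k * x k) / (σ j) ^ 2 +
    ∑ i ∈ Finset.univ.filter (fun i : Fin d => j < i),
      a i j * (x i - ∑ k ∈ Finset.univ.filter (fun k : Fin d => k < i), a i k * x k) / (σ i) ^ 2

section

variable {ι : Type*} [DecidableEq ι]

theorem hasDerivAt_update_apply (x : ι → ℝ) (j k : ι) (t : ℝ) :
    HasDerivAt (fun t => Function.update x j t k) ((Pi.single j 1 : ι → ℝ) k) t :=
  hasDerivAt_pi.1 (hasDerivAt_update x j t) k

theorem hasDerivAt_sum_mul_update (s : Finset ι) (c x : ι → ℝ) (j : ι) (t : ℝ) :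
    HasDerivAt (fun t => ∑ k ∈ s, c k * Function.update x j t k)
      (if j ∈ s then c j else 0) t := by
  have hsum := HasDerivAt.fun_sum fun k (_ : k ∈ s) =>
    (hasDerivAt_update_apply x j k t).const_mul (c k)
  simpa [Pi.single_apply, Finset.sum_ite_eq'] using hsum

theorem hasDerivAt_residual_update [Fintype ι] [LinearOrder ι] (a : ι → ι → ℝ) (x : ι → ℝ)
    (i j : ι) (t : ℝ) :
    HasDerivAt
      (fun t => Function.update x j t i -
        ∑ k ∈ univ.filter (· < i), a i k * Function.update x j t k)
      ((Pi.single j 1 : ι → ℝ) i - if j < i then a i j else 0) t := by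
  simpa using (hasDerivAt_update_apply x j i t).fun_sub
    (hasDerivAt_sum_mul_update (univ.filter (· < i)) (a i) x j t)

end

theorem linear_model_constant_diagonal_general
    (d : ℕ) (a : Fin d → Fin d → ℝ) (σ : Fin d → ℝ) :
    ∀ (j : Fin d) (x : Fin d → ℝ),
      HasDerivAt (fun t : ℝ => linScore d a σ j (Function.update x j t))
        (-1 / (σ j) ^ 2 -
          ∑ i ∈ Finset.univ.filter (fun i : Fin d => j < i), (a i j) ^ 2 / (σ i) ^ 2)
        (x j) := by
  intro j x
  have hres i := hasDerivAt_residual_update a x i j (x j)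
  have hscore := ((hres j).fun_neg.div_const ((σ j) ^ 2)).fun_add
    (HasDerivAt.fun_sum fun i (_ : i ∈ univ.filter (j < ·)) =>
      ((hres i).const_mul (a i j)).div_const ((σ i) ^ 2))
  refine hscore.congr_deriv ?_
  have hterm : ∀ i ∈ univ.filter (j < ·),
      a i j * ((Pi.single j 1 : Fin d → ℝ) i - if j < i then a i j else 0) / σ i ^ 2 =
        -(a i j ^ 2 / σ i ^ 2) := fun i hi => by
    have hji : j < i := (Finset.mem_filter.mp hi).2
    simp only [hji, hji.ne', Pi.single_apply, if_true, if_false]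
    ring
  rw [Finset.sum_congr rfl hterm, Finset.sum_neg_distrib]
  simp [sub_eq_add_neg]

theorem linear_model_constant_diagonal
    (d : ℕ) (a : Fin d → Fin d → ℝ) (σ : Fin d → ℝ) (hσ : ∀ i, 0 < σ i) :
    ∀ (j : Fin d) (x : Fin d → ℝ),
      HasDerivAt (fun t : ℝ => linScore d a σ j (Function.update x j t))
        (-1 / (σ j) ^ 2 -
          ∑ i ∈ Finset.univ.filter (fun i : Fin d => j < i), (a i j) ^ 2 / (σ i) ^ 2)
        (x j) :=
  linear_model_constant_diagonal_general d a σ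
end
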